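/- Let s ∈ ℕ ∪ {0}, M ∈ ℕ, c ≠ 0 a real number, and let x_1, …, x_M be nonzero real numbers. Define the polynomial t(x) = c·x^s·∏_{i=1}^{M}(1 − x/x_i). Let μ be a finite positive Borel measure on ℝ whose support is an infinite set and which has no mass points at the zeros of t (i.e., μ({z}) = 0 for every real z with t(z) = 0). Assume that polynomials are dense in L²(ℝ, μ) and that polynomials are dense in L²(ℝ, t(x)² dμ(x)). Then the linear span of the functions {x^n t(x) : n ≥ 0} is dense in L²(ℝ, μ). -/

import Mathlib

/-! Multiplication by `t` is an isometry from `L²(t² dμ)` into `L²(μ)`. Since `t` has only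
finitely many zeros and none of them is an atom of `μ`, `t ≠ 0` holds `μ`-a.e., so every
`f ∈ L²(μ)` equals `(f / t) · t` with `f / t ∈ L²(t² dμ)`; approximating `f / t` by a
polynomial `p` in `L²(t² dμ)` approximates `f` by `p · t` in `L²(μ)`. -/

open MeasureTheory Polynomial Filter Topology Set

noncomputable section

/-- The topological support of a Borel measure on `ℝ`. -/
def msupport (μ : Measure ℝ) : Set ℝ := {x : ℝ | ∀ U ∈ nhds x, μ U ≠ 0}

/-- Real polynomials are dense in `L²(ℝ, μ)`. -/
def PolyDense (μ : Measure ℝ) : Prop :=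
  ∀ f : ℝ → ℝ, MemLp f 2 μ → ∀ ε : ℝ, 0 < ε →
    ∃ p : Polynomial ℝ, eLpNorm (fun x => f x - p.eval x) 2 μ < ENNReal.ofReal ε

theorem Set.Countable.measure_eq_zero_of_forall_singleton {α : Type*} [MeasurableSpace α]
    {μ : Measure α} {s : Set α} (hs : s.Countable) (h : ∀ x ∈ s, μ {x} = 0) : μ s = 0 := by
  rw [← s.biUnion_of_singleton]
  exact (measure_biUnion_null_iff hs).2 h

theorem finite_setOf_mul_pow_mul_prod_one_sub_div_eq_zero {ι : Type*} [Fintype ι] {c : ℝ}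
    (hc : c ≠ 0) (s : ℕ) (xs : ι → ℝ) :
    {x : ℝ | c * x ^ s * ∏ i, (1 - x / xs i) = 0}.Finite := by
  refine ((Set.finite_range xs).insert 0).subset fun x hx => ?_
  simp only [mem_ofPred_eq, mul_eq_zero, hc, false_or, pow_eq_zero_iff', Finset.prod_eq_zero_iff,
    Finset.mem_univ, true_and, sub_eq_zero] at hx
  rcases hx with ⟨hx, -⟩ | ⟨i, hi⟩
  · exact Or.inl hx
  · have hxi : xs i ≠ 0 := by rintro h; simp [h] at hi
    exact Or.inr ⟨i, ((div_eq_one_iff_eq hxi).1 hi.symm).symm⟩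

section WeightedL2

variable {α : Type*} [MeasurableSpace α] {μ : Measure α} {w : α → ℝ}

theorem eLpNorm_two_withDensity_sq (hw : Measurable w) (h : α → ℝ) :
    eLpNorm h 2 (μ.withDensity fun x => ENNReal.ofReal (w x ^ 2)) =
      eLpNorm (fun x => h x * w x) 2 μ := by
  simp only [eLpNorm_eq_lintegral_rpow_enorm_toReal two_ne_zero ENNReal.ofNat_ne_top]
  rw [lintegral_withDensity_eq_lintegral_mul_non_measurable _ (by fun_prop)
    (ae_of_all _ fun _ => ENNReal.ofReal_lt_top)]
  congr 1
  refine lintegral_congr fun x => ?_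
  have hw2 : ENNReal.ofReal (w x ^ 2) = ‖w x‖ₑ ^ 2 := by
    rw [← sq_abs, Real.enorm_eq_ofReal_abs, ENNReal.ofReal_pow (abs_nonneg _)]
  simp only [ENNReal.toReal_ofNat, ENNReal.rpow_two, Pi.mul_apply, hw2, enorm_mul]
  ring

theorem memLp_div_withDensity_sq (hw : Measurable w) (hw0 : ∀ᵐ x ∂μ, w x ≠ 0) {f : α → ℝ}
    (hf : MemLp f 2 μ) :
    MemLp (fun x => f x / w x) 2 (μ.withDensity fun x => ENNReal.ofReal (w x ^ 2)) := by
  refine ⟨(hf.1.div₀ hw.aestronglyMeasurable).mono_ac (withDensity_absolutelyContinuous _ _), ?_⟩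
  rw [eLpNorm_two_withDensity_sq hw, eLpNorm_congr_ae (g := f)]
  · exact hf.2
  · filter_upwards [hw0] with x hx using div_mul_cancel₀ (f x) hx

end WeightedL2

theorem PolyDense.exists_eLpNorm_sub_mul_lt {μ : Measure ℝ} {w : ℝ → ℝ} (hw : Measurable w)
    (hw0 : ∀ᵐ x ∂μ, w x ≠ 0)
    (hdense : PolyDense (μ.withDensity fun x => ENNReal.ofReal (w x ^ 2)))
    {f : ℝ → ℝ} (hf : MemLp f 2 μ) {ε : ℝ} (hε : 0 < ε) :
    ∃ p : ℝ[X], eLpNorm (fun x => f x - p.eval x * w x) 2 μ < ENNReal.ofReal ε := by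
  obtain ⟨p, hp⟩ := hdense _ (memLp_div_withDensity_sq hw hw0 hf) ε hε
  refine ⟨p, ?_⟩
  calc eLpNorm (fun x => f x - p.eval x * w x) 2 μ
      = eLpNorm (fun x => (f x / w x - p.eval x) * w x) 2 μ := by
        refine eLpNorm_congr_ae ?_
        filter_upwards [hw0] with x hx
        rw [sub_mul, div_mul_cancel₀ (f x) hx]
    _ = eLpNorm (fun x => f x / w x - p.eval x) 2
          (μ.withDensity fun x => ENNReal.ofReal (w x ^ 2)) :=
        (eLpNorm_two_withDensity_sq hw _).symm
    _ < ENNReal.ofReal ε := hp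

theorem tdense_finite_general
    (s M : ℕ) (c : ℝ) (hc : c ≠ 0)
    (xs : Fin M → ℝ)
    (t : ℝ → ℝ) (ht : ∀ x, t x = c * x ^ s * ∏ i, (1 - x / xs i))
    (μ : Measure ℝ)
    (hmass : ∀ z : ℝ, t z = 0 → μ {z} = 0)
    (hdenseW : PolyDense (μ.withDensity fun x => ENNReal.ofReal ((t x) ^ 2))) :
    ∀ f : ℝ → ℝ, MemLp f 2 μ → ∀ ε : ℝ, 0 < ε →
      ∃ p : Polynomial ℝ,
        eLpNorm (fun x => f x - p.eval x * t x) 2 μ < ENNReal.ofReal ε := by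
  have ht_meas : Measurable t := by rw [funext ht]; fun_prop
  have hzeros : {x | t x = 0}.Finite := by
    simpa only [ht] using finite_setOf_mul_pow_mul_prod_one_sub_div_eq_zero hc s xs
  have ht_ne : ∀ᵐ x ∂μ, t x ≠ 0 := by
    simpa only [ae_iff, ne_eq, not_not] using
      hzeros.countable.measure_eq_zero_of_forall_singleton hmass
  exact fun f hf ε hε => hdenseW.exists_eLpNorm_sub_mul_lt ht_meas ht_ne hf hε

/-- **Theorem 2.1 (finitely many factors).** Let `t(x) = c xˢ ∏_{i=1}^M (1 - x/xᵢ)` with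
`c ≠ 0` and nonzero `xᵢ`.  Let `μ` be a finite positive measure on `ℝ` with infinite support
and no mass points at the zeros of `t`.  If polynomials are dense in `L²(μ)` and in
`L²(t² dμ)`, then the linear span of `{xⁿ t(x) : n ≥ 0}` (i.e. the set of functions
`q(x) t(x)` with `q` a polynomial) is dense in `L²(μ)`. -/
theorem tdense_finite
    (s M : ℕ) (c : ℝ) (hc : c ≠ 0)
    (xs : Fin M → ℝ) (hxs : ∀ i, xs i ≠ 0)
    (t : ℝ → ℝ) (ht : ∀ x, t x = c * x ^ s * ∏ i, (1 - x / xs i))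
    (μ : Measure ℝ) [IsFiniteMeasure μ]
    (hsupp : (msupport μ).Infinite)
    (hmass : ∀ z : ℝ, t z = 0 → μ {z} = 0)
    (hdense : PolyDense μ)
    (hdenseW : PolyDense (μ.withDensity fun x => ENNReal.ofReal ((t x) ^ 2))) :
    ∀ f : ℝ → ℝ, MemLp f 2 μ → ∀ ε : ℝ, 0 < ε →
      ∃ p : Polynomial ℝ,
        eLpNorm (fun x => f x - p.eval x * t x) 2 μ < ENNReal.ofReal ε :=
  tdense_finite_general s M c hc xs t ht μ hmass hdenseW
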